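/- arXiv:1807.09238 — 6 statements merged into one kernel-verified Lean document; each statement's English description precedes it below -/
import Mathlib

section
/- For every t > 0, the double series ∑_{m≥1} t^m ∑_{j≥0} (m)_j / (j! (j+m)^{m+1}) converges and equals ∫_0^∞ ( e^{t v/(e^v − 1)} − 1 ) dv, which is finite. -/
/-!
Write `x = e^{-v}`, so that `t v / (e^v - 1) = t v x / (1 - x)`. Expanding the exponential and then
`(1 - x)^{-(m+1)} = ∑_j C(j+m, m) x^j` writes `e^{t v/(e^v-1)} - 1` as a double series of
nonnegative terms `t^{m+1}/(m+1)! · C(j+m, m) · v^{m+1} e^{-(j+m+1) v}`. Integrating term by term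
(Tonelli) with `∫_0^∞ v^{m+1} e^{-a v} dv = (m+1)!/a^{m+2}` gives `t^{m+1} C(j+m, m)/(j+m+1)^{m+2}`,
which is the summand of the double series since `(m+1)_j = j! C(j+m, m)`. The double series itself
converges because `C(j+m, m) ≤ (j+m+1)^m / m!`.
-/

open Real MeasureTheory Polynomial

/-- Pochhammer symbol `(a)_k = a (a+1) ⋯ (a+k-1)`. -/
noncomputable def poch (a : ℝ) (k : ℕ) : ℝ := (ascPochhammer ℝ k).eval a

open Set

lemma integrable_and_integral_eq_of_lintegral_ofReal_eq {α : Type*} [MeasurableSpace α]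
    {μ : Measure α} {f : α → ℝ} {c : ℝ} (hfm : AEStronglyMeasurable f μ) (hf : 0 ≤ᵐ[μ] f)
    (hc : 0 ≤ c) (h : ∫⁻ x, ENNReal.ofReal (f x) ∂μ = ENNReal.ofReal c) :
    Integrable f μ ∧ ∫ x, f x ∂μ = c := by
  refine ⟨⟨hfm, ?_⟩, ?_⟩
  · rw [hasFiniteIntegral_iff_ofReal hf, h]
    exact ENNReal.ofReal_lt_top
  · rw [integral_eq_lintegral_of_nonneg_ae hf hfm, h, ENNReal.toReal_ofReal hc]

lemma integrableOn_pow_mul_exp_neg_mul (n : ℕ) {a : ℝ} (ha : 0 < a) :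
    IntegrableOn (fun v : ℝ => v ^ n * exp (-a * v)) (Ioi 0) := by
  refine (integrableOn_rpow_mul_exp_neg_mul_rpow (s := n) (by linarith [n.cast_nonneg (α := ℝ)])
    one_pos ha).congr_fun (fun v _ => ?_) measurableSet_Ioi
  simp

lemma integral_pow_mul_exp_neg_mul (n : ℕ) {a : ℝ} (ha : 0 < a) :
    ∫ v in Ioi (0 : ℝ), v ^ n * exp (-a * v) = n.factorial / a ^ (n + 1) := by
  have h := integral_rpow_mul_exp_neg_mul_Ioi (a := n + 1) (by positivity) ha
  rw [add_sub_cancel_right, Gamma_nat_eq_factorial, ← Nat.cast_succ, rpow_natCast] at h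
  simp_rw [rpow_natCast, ← neg_mul] at h
  rw [h, Nat.succ_eq_add_one, one_div_pow]
  field_simp

lemma mul_div_exp_sub_one_nonneg {t : ℝ} (ht : 0 ≤ t) (v : ℝ) : 0 ≤ t * v / (exp v - 1) := by
  rw [mul_div_assoc]
  refine mul_nonneg ht ?_
  rcases le_total 0 v with hv | hv
  · exact div_nonneg hv (by linarith [add_one_le_exp v])
  · exact div_nonneg_of_nonpos hv (by linarith [exp_le_one_iff.mpr hv])

lemma hasSum_pow_succ_div_factorial (y : ℝ) :
    HasSum (fun m : ℕ => y ^ (m + 1) / (m + 1).factorial) (exp y - 1) := by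
  have h : HasSum (fun n : ℕ => y ^ n / n.factorial) (exp y) := by
    rw [exp_eq_exp_ℝ]
    exact NormedSpace.expSeries_div_hasSum_exp y
  simpa using (hasSum_nat_add_iff' 1).mpr h

lemma poch_natCast_add_one (m j : ℕ) :
    poch ((m : ℝ) + 1) j = (j.factorial : ℝ) * ((j + m).choose m : ℝ) := by
  rw [poch, show ((m : ℝ) + 1) = ((m + 1 : ℕ) : ℝ) by push_cast; ring,
    ← ascPochhammer_eval_cast, ascPochhammer_nat_eq_ascFactorial,
    Nat.ascFactorial_eq_factorial_mul_choose, add_comm m j, ← Nat.choose_symm_add]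
  push_cast
  ring

noncomputable def doubleSeriesTerm (t : ℝ) (p : ℕ × ℕ) : ℝ :=
  t ^ (p.1 + 1) * ((p.2 + p.1).choose p.1 : ℝ) / ((p.2 : ℝ) + p.1 + 1) ^ (p.1 + 2)

lemma poch_summand_eq_doubleSeriesTerm (t : ℝ) (m j : ℕ) :
    t ^ (m + 1) * poch (m + 1) j / ((j.factorial : ℝ) * ((j : ℝ) + m + 1) ^ (m + 2)) =
      doubleSeriesTerm t (m, j) := by
  have := j.factorial_pos
  rw [poch_natCast_add_one, doubleSeriesTerm]
  field_simp

lemma doubleSeriesTerm_nonneg {t : ℝ} (ht : 0 ≤ t) (p : ℕ × ℕ) : 0 ≤ doubleSeriesTerm t p := by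
  unfold doubleSeriesTerm
  positivity

lemma norm_doubleSeriesTerm_le (t : ℝ) (p : ℕ × ℕ) :
    ‖doubleSeriesTerm t p‖ ≤ |t| ^ (p.1 + 1) / p.1.factorial * (1 / ((p.2 : ℝ) + 1) ^ 2) := by
  obtain ⟨m, j⟩ := p
  have hD : (0 : ℝ) < (j : ℝ) + m + 1 := by positivity
  have hchoose : ((j + m).choose m : ℝ) ≤ ((j : ℝ) + m + 1) ^ m / m.factorial := by
    refine (Nat.choose_le_pow_div m (j + m)).trans ?_
    gcongr
    push_cast
    linarith
  calc ‖doubleSeriesTerm t (m, j)‖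
      = |t| ^ (m + 1) * ((j + m).choose m : ℝ) / ((j : ℝ) + m + 1) ^ (m + 2) := by
        simp [doubleSeriesTerm, abs_of_pos hD]
    _ ≤ |t| ^ (m + 1) * (((j : ℝ) + m + 1) ^ m / m.factorial) / ((j : ℝ) + m + 1) ^ (m + 2) := by
        gcongr
    _ = |t| ^ (m + 1) / m.factorial * (1 / ((j : ℝ) + m + 1) ^ 2) := by
        field_simp
        ring
    _ ≤ |t| ^ (m + 1) / m.factorial * (1 / ((j : ℝ) + 1) ^ 2) := by
        gcongr
        linarith

lemma summable_doubleSeriesTerm (t : ℝ) : Summable (doubleSeriesTerm t) := by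
  have hexp : Summable fun m : ℕ => |t| ^ (m + 1) / m.factorial := by
    simpa [pow_succ, mul_div_right_comm] using (Real.summable_pow_div_factorial |t|).mul_right |t|
  have hsq : Summable fun j : ℕ => 1 / ((j : ℝ) + 1) ^ 2 := by
    simpa using (summable_nat_add_iff 1).mpr (Real.summable_one_div_nat_pow.mpr one_lt_two)
  exact .of_norm_bounded (hexp.mul_of_nonneg hsq (fun _ => by positivity) fun _ => by positivity)
    (norm_doubleSeriesTerm_le t)

noncomputable def expansionTerm (t : ℝ) (p : ℕ × ℕ) (v : ℝ) : ℝ :=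
  t ^ (p.1 + 1) / (p.1 + 1).factorial * ((p.2 + p.1).choose p.1 : ℝ) *
    (v ^ (p.1 + 1) * exp (-((p.2 : ℝ) + p.1 + 1) * v))

lemma hasSum_expansionTerm_snd (t : ℝ) (m : ℕ) {v : ℝ} (hv : 0 < v) :
    HasSum (fun j => expansionTerm t (m, j) v)
      ((t * v / (exp v - 1)) ^ (m + 1) / (m + 1).factorial) := by
  set x := exp (-v) with hx
  have hx0 : 0 < x := exp_pos _
  have hx1 : x < 1 := exp_lt_one_iff.mpr (by linarith)
  have hnorm : ‖x‖ < 1 := by rwa [norm_of_nonneg hx0.le]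
  have hexp : exp v - 1 = (1 - x) / x := by
    rw [hx, exp_neg]
    field_simp
  have hgeom := (hasSum_choose_mul_geometric_of_norm_lt_one (𝕜 := ℝ) m hnorm).mul_left
    ((t * v * x) ^ (m + 1) / (m + 1).factorial)
  have hterm (j : ℕ) : expansionTerm t (m, j) v =
      (t * v * x) ^ (m + 1) / (m + 1).factorial * ((j + m).choose m * x ^ j) := by
    have hexp_mul : exp (-((j : ℝ) + m + 1) * v) = x ^ (m + 1) * x ^ j := by
      rw [hx, ← pow_add, ← exp_nat_mul]
      push_cast
      ring_nf
    simp only [expansionTerm, hexp_mul]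
    ring
  have hvalue : (t * v / (exp v - 1)) ^ (m + 1) / (m + 1).factorial =
      (t * v * x) ^ (m + 1) / (m + 1).factorial * (1 / (1 - x) ^ (m + 1)) := by
    have : 0 < 1 - x := by linarith
    rw [hexp, div_div_eq_mul_div, div_pow]
    field_simp
  rw [funext hterm, hvalue]
  exact hgeom

lemma tsum_ofReal_expansionTerm {t : ℝ} (ht : 0 ≤ t) {v : ℝ} (hv : 0 < v) :
    ∑' p : ℕ × ℕ, ENNReal.ofReal (expansionTerm t p v) =
      ENNReal.ofReal (exp (t * v / (exp v - 1)) - 1) := by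
  have hy := mul_div_exp_sub_one_nonneg ht v
  have hinner (m : ℕ) : ∑' j, ENNReal.ofReal (expansionTerm t (m, j) v) =
      ENNReal.ofReal ((t * v / (exp v - 1)) ^ (m + 1) / (m + 1).factorial) := by
    rw [← ENNReal.ofReal_tsum_of_nonneg (fun j => by unfold expansionTerm; positivity)
      (hasSum_expansionTerm_snd t m hv).summable, (hasSum_expansionTerm_snd t m hv).tsum_eq]
  rw [ENNReal.tsum_prod', tsum_congr hinner, ← ENNReal.ofReal_tsum_of_nonneg
      (fun m => by positivity) (hasSum_pow_succ_div_factorial _).summable,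
    (hasSum_pow_succ_div_factorial _).tsum_eq]

lemma lintegral_expansionTerm {t : ℝ} (ht : 0 ≤ t) (p : ℕ × ℕ) :
    ∫⁻ v in Ioi (0 : ℝ), ENNReal.ofReal (expansionTerm t p v) =
      ENNReal.ofReal (doubleSeriesTerm t p) := by
  obtain ⟨m, j⟩ := p
  have ha : (0 : ℝ) < j + m + 1 := by positivity
  have hint : IntegrableOn (fun v => expansionTerm t (m, j) v) (Ioi 0) :=
    (integrableOn_pow_mul_exp_neg_mul (m + 1) ha).const_mul _
  have hnn : 0 ≤ᵐ[volume.restrict (Ioi (0 : ℝ))] fun v => expansionTerm t (m, j) v :=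
    (ae_restrict_iff' measurableSet_Ioi).mpr <| .of_forall fun v (hv : 0 < v) => by
      unfold expansionTerm
      positivity
  rw [← ofReal_integral_eq_lintegral_ofReal hint hnn]
  congr 1
  simp only [expansionTerm, integral_const_mul, integral_pow_mul_exp_neg_mul (m + 1) ha,
    doubleSeriesTerm, Nat.factorial_succ]
  push_cast
  field_simp

lemma lintegral_ofReal_exp_div_exp_sub_one_sub_one {t : ℝ} (ht : 0 ≤ t) :
    ∫⁻ v in Ioi (0 : ℝ), ENNReal.ofReal (exp (t * v / (exp v - 1)) - 1) =
      ENNReal.ofReal (∑' p, doubleSeriesTerm t p) := by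
  have hmeas (p : ℕ × ℕ) : AEMeasurable (fun v => ENNReal.ofReal (expansionTerm t p v)) :=
    (by unfold expansionTerm; fun_prop : Measurable (expansionTerm t p)).ennreal_ofReal.aemeasurable
  rw [setLIntegral_congr_fun measurableSet_Ioi fun v hv => (tsum_ofReal_expansionTerm ht hv).symm,
    lintegral_tsum fun p => (hmeas p).restrict, tsum_congr (lintegral_expansionTerm ht),
    ENNReal.ofReal_tsum_of_nonneg (doubleSeriesTerm_nonneg ht) (summable_doubleSeriesTerm t)]

/-- For `t > 0`, the double series `∑_{m ≥ 1} t^m ∑_{j ≥ 0} (m)_j / (j! (j+m)^{m+1})`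
(indexed below by `m + 1` with `m : ℕ`) converges and equals
`∫_0^∞ (e^{t v / (e^v - 1)} - 1) dv`, which is finite. -/
theorem stmt1 (t : ℝ) (ht : 0 < t) :
    (Summable fun p : ℕ × ℕ =>
      t ^ (p.1 + 1) * poch (p.1 + 1) p.2 /
        ((p.2.factorial : ℝ) * ((p.2 : ℝ) + (p.1 : ℝ) + 1) ^ (p.1 + 2))) ∧
    MeasureTheory.IntegrableOn
      (fun v : ℝ => Real.exp (t * v / (Real.exp v - 1)) - 1) (Set.Ioi 0) ∧
    (∑' (m : ℕ) (j : ℕ), t ^ (m + 1) * poch (m + 1) j /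
        ((j.factorial : ℝ) * ((j : ℝ) + (m : ℝ) + 1) ^ (m + 2))) =
      ∫ v in Set.Ioi (0 : ℝ), (Real.exp (t * v / (Real.exp v - 1)) - 1) := by
  have hnonneg : 0 ≤ fun v : ℝ => exp (t * v / (exp v - 1)) - 1 := fun v =>
    sub_nonneg.mpr (one_le_exp (mul_div_exp_sub_one_nonneg ht.le v))
  obtain ⟨hint, hintegral⟩ := integrable_and_integral_eq_of_lintegral_ofReal_eq
    (by fun_prop : Measurable fun v : ℝ => exp (t * v / (exp v - 1)) - 1).aestronglyMeasurable
    (.of_forall hnonneg) (tsum_nonneg (doubleSeriesTerm_nonneg ht.le))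
    (lintegral_ofReal_exp_div_exp_sub_one_sub_one ht.le)
  simp only [poch_summand_eq_doubleSeriesTerm, Prod.mk.eta]
  refine ⟨summable_doubleSeriesTerm t, hint, ?_⟩
  rw [hintegral, (summable_doubleSeriesTerm t).tsum_prod]
end

section
/- For every ω ∈ (0,1) and every t with 0 < t < ω, the function x ↦ sinh(ωx) e^{−t x coth(x)} − sinh((ω−t)x) is square-integrable on (0, ∞), i.e. ∫_0^∞ ( sinh(ωx) e^{−t x coth(x)} − sinh((ω−t)x) )² dx < ∞. (Equivalently, the map x ↦ φ_ω(x)ψ_t(x) − e^t((ω−t)/ω) φ_{ω−t}(x), with φ_λ(x) = sinh(λx)/(λ sinh x) and ψ_t(x) = e^{t(1−x coth x)}, is square-integrable on (0,∞) with respect to the measure sinh²(x) dx.) -/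
/-!
Write `c = x coth x`. For `x > 0` we have `0 ≤ c - x = x e^{-x} / sinh x ≤ e^{-x}`, so replacing `c`
by `x` in the exponent raises the function, by at most `(t/2) e^{-(1+t-ω)x}`. After that replacement
it equals `(e^{-(ω-t)x} - e^{-(ω+t)x}) / 2 ∈ [0, e^{-(ω-t)x}/2]`. Hence the function is squeezed
between two exponentially decaying functions, and its square is integrable on `(0, ∞)`.
-/

open Real MeasureTheory Set

lemma exp_sub_exp_le_exp_mul_sub (a b : ℝ) : exp a - exp b ≤ exp a * (a - b) := by
  have hba : exp b = exp a * exp (b - a) := by rw [← exp_add]; ring_nf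
  have := add_one_le_exp (b - a)
  nlinarith [exp_pos a]

lemma self_le_mul_cosh_div_sinh {x : ℝ} (hx : 0 < x) : x ≤ x * cosh x / sinh x := by
  rw [le_div_iff₀ (sinh_pos_iff.2 hx)]
  exact mul_le_mul_of_nonneg_left (sinh_lt_cosh x).le hx.le

lemma mul_cosh_div_sinh_sub_self_le_exp_neg {x : ℝ} (hx : 0 < x) :
    x * cosh x / sinh x - x ≤ exp (-x) := by
  have hs : 0 < sinh x := sinh_pos_iff.2 hx
  have hxs : x < sinh x := self_lt_sinh_iff.2 hx
  rw [sub_le_iff_le_add, div_le_iff₀ hs]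
  nlinarith [cosh_sub_sinh x, exp_pos (-x)]

lemma sinh_mul_mul_exp_neg_sub_sinh (ω t x : ℝ) :
    sinh (ω * x) * exp (-t * x) - sinh ((ω - t) * x) =
      (exp (-((ω - t) * x)) - exp (-((ω + t) * x))) / 2 := by
  have e₁ : exp (ω * x) * exp (-t * x) = exp ((ω - t) * x) := by rw [← exp_add]; ring_nf
  have e₂ : exp (-(ω * x)) * exp (-t * x) = exp (-((ω + t) * x)) := by rw [← exp_add]; ring_nf
  rw [sinh_eq, sinh_eq]
  linear_combination e₁ / 2 - e₂ / 2

lemma sinh_mul_mul_exp_neg_sub_sinh_nonneg {ω t x : ℝ} (ht : 0 ≤ t) (hx : 0 ≤ x) :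
    0 ≤ sinh (ω * x) * exp (-t * x) - sinh ((ω - t) * x) := by
  rw [sinh_mul_mul_exp_neg_sub_sinh, sub_div, sub_nonneg]
  gcongr
  nlinarith

lemma sinh_mul_mul_exp_neg_coth_sub_sinh_le {ω t x : ℝ} (hω : 0 ≤ ω) (ht : 0 ≤ t) (hx : 0 < x) :
    sinh (ω * x) * exp (-t * (x * cosh x / sinh x)) - sinh ((ω - t) * x) ≤
      1 / 2 * exp (-(ω - t) * x) := by
  have hexp : exp (-t * (x * cosh x / sinh x)) ≤ exp (-t * x) :=
    exp_le_exp.2 (by nlinarith [self_le_mul_cosh_div_sinh hx])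
  have hsinh : 0 ≤ sinh (ω * x) := sinh_nonneg_iff.2 (by positivity)
  calc sinh (ω * x) * exp (-t * (x * cosh x / sinh x)) - sinh ((ω - t) * x)
      ≤ sinh (ω * x) * exp (-t * x) - sinh ((ω - t) * x) := by gcongr
    _ = (exp (-((ω - t) * x)) - exp (-((ω + t) * x))) / 2 := sinh_mul_mul_exp_neg_sub_sinh ω t x
    _ ≤ 1 / 2 * exp (-(ω - t) * x) := by rw [neg_mul]; linarith [exp_pos (-((ω + t) * x))]

lemma neg_le_sinh_mul_mul_exp_neg_coth_sub_sinh {ω t x : ℝ} (ht : 0 ≤ t) (hx : 0 < x) :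
    -(t / 2 * exp (-(1 + t - ω) * x)) ≤
      sinh (ω * x) * exp (-t * (x * cosh x / sinh x)) - sinh ((ω - t) * x) := by
  set c := x * cosh x / sinh x
  have hsinh : sinh (ω * x) ≤ exp (ω * x) / 2 := by
    rw [sinh_eq]; linarith [exp_pos (-(ω * x))]
  have hgap : exp (-t * x) - exp (-t * c) ≤ exp (-t * x) * (t * exp (-x)) :=
    calc exp (-t * x) - exp (-t * c) ≤ exp (-t * x) * (-t * x - -t * c) :=
          exp_sub_exp_le_exp_mul_sub _ _
      _ = exp (-t * x) * (t * (c - x)) := by ring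
      _ ≤ exp (-t * x) * (t * exp (-x)) := by
          gcongr; exact mul_cosh_div_sinh_sub_self_le_exp_neg hx
  have hprod : exp (ω * x) * exp (-t * x) * exp (-x) = exp (-(1 + t - ω) * x) := by
    rw [← exp_add, ← exp_add]; ring_nf
  have hcorr : sinh (ω * x) * (exp (-t * x) - exp (-t * c)) ≤ t / 2 * exp (-(1 + t - ω) * x) :=
    calc sinh (ω * x) * (exp (-t * x) - exp (-t * c))
        ≤ exp (ω * x) / 2 * (exp (-t * x) * (t * exp (-x))) := by
          refine mul_le_mul hsinh hgap ?_ (by positivity)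
          rw [sub_nonneg]
          exact exp_le_exp.2 (by nlinarith [self_le_mul_cosh_div_sinh hx])
      _ = t / 2 * exp (-(1 + t - ω) * x) := by rw [← hprod]; ring
  linarith [sinh_mul_mul_exp_neg_sub_sinh_nonneg (ω := ω) ht hx.le]

lemma sq_le_sq_add_sq_of_neg_le_of_le {a l u : ℝ} (hl : -l ≤ a) (hu : a ≤ u) (hl₀ : 0 ≤ l)
    (hu₀ : 0 ≤ u) : a ^ 2 ≤ u ^ 2 + l ^ 2 := by
  rcases le_total 0 a with ha | ha <;> nlinarith

lemma integrableOn_sq_const_mul_exp_neg_mul_Ioi (c : ℝ) {b : ℝ} (hb : 0 < b) :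
    IntegrableOn (fun x : ℝ => (c * exp (-b * x)) ^ 2) (Ioi 0) := by
  refine IntegrableOn.congr_fun
    ((exp_neg_integrableOn_Ioi 0 (by linarith : 0 < 2 * b)).const_mul (c ^ 2))
    (fun x _ => ?_) measurableSet_Ioi
  rw [mul_pow, ← exp_nat_mul]
  ring_nf

/-- For `ω ∈ (0,1)` and `0 < t < ω`, the function
`x ↦ sinh(ωx) e^{-t x coth x} - sinh((ω-t)x)` is square-integrable on `(0, ∞)`. -/
theorem stmt8 (t ω : ℝ) (hω : ω ∈ Set.Ioo (0 : ℝ) 1) (ht : 0 < t) (htω : t < ω) :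
    MeasureTheory.IntegrableOn
      (fun x : ℝ =>
        (Real.sinh (ω * x) * Real.exp (-t * (x * Real.cosh x / Real.sinh x)) -
            Real.sinh ((ω - t) * x)) ^ 2)
      (Set.Ioi 0) := by
  have hdom : IntegrableOn (fun x : ℝ => (1 / 2 * exp (-(ω - t) * x)) ^ 2 +
      (t / 2 * exp (-(1 + t - ω) * x)) ^ 2) (Ioi 0) :=
    (integrableOn_sq_const_mul_exp_neg_mul_Ioi _ (by linarith)).add
      (integrableOn_sq_const_mul_exp_neg_mul_Ioi _ (by linarith [hω.2]))
  refine hdom.mono' (by fun_prop : Measurable _).aestronglyMeasurable ?_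
  refine (ae_restrict_iff' measurableSet_Ioi).2 (ae_of_all _ fun x hx => ?_)
  rw [norm_pow, Real.norm_eq_abs, sq_abs]
  exact sq_le_sq_add_sq_of_neg_le_of_le
    (neg_le_sinh_mul_mul_exp_neg_coth_sub_sinh ht.le hx)
    (sinh_mul_mul_exp_neg_coth_sub_sinh_le hω.1.le ht.le hx) (by positivity) (by positivity)
end

section
/- For every ω ∈ (0,1), every t with 0 < t < ω, the function x ↦ sinh(ωx) e^{−t x coth(x)} − sinh((ω−t)x), extended to an odd function on ℝ, has a Lebesgue-integrable derivative on ℝ; consequently, for every ξ ∈ ℝ, ∫_ℝ e^{−ixξ} · ∂_x[ sinh(ωx) e^{−t c(x)} − sinh((ω−t)x) ] dx = iξ ∫_ℝ e^{−ixξ} [ sinh(ωx) e^{−t c(x)} − sinh((ω−t)x) ] dx = 2ξ ∫_0^∞ sin(xξ) [ sinh(ωx) e^{−t x coth(x)} − sinh((ω−t)x) ] dx. -/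
/-!
The function `c(x) = x coth x` is even, lies between `1` and `cosh x` (so `c'(0) = 0`), and for
`x > 0` satisfies `0 ≤ c(x) - x ≤ e^{-x}` and `|1 - c'(x)| ≤ 1 / sinh x`. Replacing `c(x)` by `x`
turns `g` into `(e^{-(ω-t)x} - e^{-(ω+t)x}) / 2`, and the error this makes in `g` and in `g'` is
`O(e^{-(1-ω+t)x})`. Hence on `(0, ∞)` both `g` and `g'` are bounded by
`e^{-(ω-t)x} + 2 e^{-(1-ω+t)x}`, and since `g` is odd and `g'` even, both are integrable on `ℝ`.
The first identity is then the Fourier transform of a derivative; the second holds because `g` is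
odd, so the cosine part of `e^{-ixξ}` integrates to zero against `g` and the sine part gives an
even integrand.
-/

open Real MeasureTheory

/-- The continuous extension of `x ↦ x * coth x`. -/
noncomputable def cFun (x : ℝ) : ℝ := if x = 0 then 1 else x * Real.cosh x / Real.sinh x

/-- The (odd) function `g(x) = sinh(ωx) e^{-t c(x)} - sinh((ω-t)x)` on `ℝ`. -/
noncomputable def gFun (t ω : ℝ) (x : ℝ) : ℝ :=
  Real.sinh (ω * x) * Real.exp (-t * cFun x) - Real.sinh ((ω - t) * x)

open Set Filter Asymptotics Topology FourierTransform

lemma integrable_of_norm_neg_eq_of_le_on_Ioi {E : Type*} [NormedAddCommGroup E] {f : ℝ → E}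
    {h : ℝ → ℝ} (hf : AEStronglyMeasurable f) (hsymm : ∀ x, ‖f (-x)‖ = ‖f x‖)
    (hh : IntegrableOn h (Ioi 0)) (hle : ∀ x, 0 < x → ‖f x‖ ≤ h x) : Integrable f := by
  have hpos : IntegrableOn f (Ioi 0) :=
    hh.mono' hf.restrict ((ae_restrict_mem measurableSet_Ioi).mono hle)
  have hneg : IntegrableOn f (Iio 0) :=
    (IntegrableOn.comp_neg_Iio (c := 0) (by rwa [neg_zero])).congr' hf.restrict
      (Eventually.of_forall hsymm)
  rw [← integrableOn_univ, ← Iio_union_Ici (a := (0 : ℝ))]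
  exact hneg.union ((integrableOn_Ici_iff_integrableOn_Ioi (by finiteness)).2 hpos)

lemma Function.Odd.integral_eq_zero {G E : Type*} [MeasurableSpace G] [AddGroup G]
    [MeasurableNeg G] [NormedAddCommGroup E] [NormedSpace ℝ E] {μ : Measure G} [μ.IsNegInvariant]
    {f : G → E} (hf : f.Odd) : ∫ x, f x ∂μ = 0 := by
  have h := integral_neg_eq_self f μ
  simp only [hf.eq, integral_neg] at h
  have h2 : (2 : ℝ) • ∫ x, f x ∂μ = 0 := by
    rw [two_smul]
    nth_rewrite 1 [← h]
    exact neg_add_cancel _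
  exact (smul_eq_zero.1 h2).resolve_left two_ne_zero

lemma Function.Even.integral_eq_two_mul_integral_Ioi {f : ℝ → ℝ} (hf : f.Even) :
    ∫ x, f x = 2 * ∫ x in Ioi 0, f x := by
  rw [← integral_comp_abs]
  congr 1 with x
  rcases le_or_gt 0 x with hx | hx
  · rw [abs_of_nonneg hx]
  · rw [abs_of_neg hx, hf.eq]

section Fourier

open Complex

lemma integral_exp_mul_eq_fourier (f : ℝ → ℂ) (ξ : ℝ) :
    ∫ x : ℝ, cexp (-I * x * ξ) * f x = 𝓕 f (ξ / (2 * π)) := by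
  rw [Real.fourier_real_eq_integral_exp_smul]
  congr 1 with x
  rw [smul_eq_mul]
  congr 2
  push_cast
  field_simp

lemma integral_exp_mul_deriv {f : ℝ → ℝ} (hf : Integrable f) (hd : Differentiable ℝ f)
    (hf' : Integrable (deriv f)) (ξ : ℝ) :
    ∫ x : ℝ, cexp (-I * x * ξ) * ((deriv f x : ℝ) : ℂ)
      = I * ξ * ∫ x : ℝ, cexp (-I * x * ξ) * (f x : ℂ) := by
  have hderiv : deriv (fun x => (f x : ℂ)) = fun x => ((deriv f x : ℝ) : ℂ) :=
    funext fun x => (hd x).hasDerivAt.ofReal_comp.deriv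
  have hfourier := congrFun (Real.fourier_deriv hf.ofReal
    (fun x => (hd x).hasDerivAt.ofReal_comp.differentiableAt) (hderiv ▸ hf'.ofReal)) (ξ / (2 * π))
  rw [integral_exp_mul_eq_fourier, integral_exp_mul_eq_fourier, ← hderiv, hfourier, smul_eq_mul]
  congr 1
  push_cast
  field_simp

lemma integral_exp_mul_of_odd {f : ℝ → ℝ} (hf : Integrable f) (hodd : f.Odd) (ξ : ℝ) :
    ∫ x : ℝ, cexp (-I * x * ξ) * (f x : ℂ)
      = -2 * I * ((∫ x in Ioi 0, Real.sin (x * ξ) * f x : ℝ) : ℂ) := by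
  have hcos : Integrable fun x => Real.cos (x * ξ) * f x :=
    hf.bdd_mul (by fun_prop) (Eventually.of_forall fun x => by simpa using abs_cos_le_one _)
  have hsin : Integrable fun x => Real.sin (x * ξ) * f x :=
    hf.bdd_mul (by fun_prop) (Eventually.of_forall fun x => by simpa using abs_sin_le_one _)
  have hsplit (x : ℝ) : cexp (-I * x * ξ) * f x
      = ((Real.cos (x * ξ) * f x : ℝ) : ℂ) - I * ((Real.sin (x * ξ) * f x : ℝ) : ℂ) := by
    rw [show -I * x * ξ = ((-(x * ξ) : ℝ) : ℂ) * I by push_cast; ring, exp_mul_I,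
      ← ofReal_cos, ← ofReal_sin, Real.cos_neg, Real.sin_neg]
    push_cast
    ring
  have hcos0 : ∫ x, Real.cos (x * ξ) * f x = 0 :=
    Function.Odd.integral_eq_zero fun x => by simp [neg_mul, Real.cos_neg, hodd.eq]
  have hsin2 := Function.Even.integral_eq_two_mul_integral_Ioi
    (f := fun x => Real.sin (x * ξ) * f x) fun x => by simp [neg_mul, Real.sin_neg, hodd.eq]
  simp_rw [hsplit]
  rw [integral_sub (by exact hcos.ofReal) (by exact hsin.ofReal.const_mul I), integral_const_mul,
    integral_complex_ofReal, integral_complex_ofReal, hcos0, hsin2]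
  push_cast
  ring

end Fourier

namespace Real

lemma sinh_le_mul_cosh {x : ℝ} (hx : 0 ≤ x) : sinh x ≤ x * cosh x := by
  have hmono : MonotoneOn (fun y => y * cosh y - sinh y) (Ici 0) := by
    refine monotoneOn_of_hasDerivWithinAt_nonneg (f' := fun y => y * sinh y) (convex_Ici 0)
      (by fun_prop) (fun y _ => ?_) (fun y hy => ?_)
    · exact ((((hasDerivAt_id' y).mul (hasDerivAt_cosh y)).sub (hasDerivAt_sinh y)).congr_deriv
        (by ring)).hasDerivWithinAt
    · rw [interior_Ici] at hy
      exact mul_nonneg hy.le (sinh_nonneg_iff.2 hy.le)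
  simpa using hmono self_mem_Ici hx hx

lemma abs_sinh_le_exp {x : ℝ} (hx : 0 ≤ x) : |sinh x| ≤ exp x := by
  rw [abs_of_nonneg (sinh_nonneg_iff.2 hx)]
  linarith [cosh_add_sinh x, one_le_cosh x]

lemma sinh_mul_le_exp_mul_sinh {ω x : ℝ} (hω : ω ≤ 1) (hx : 0 ≤ x) :
    sinh (ω * x) ≤ exp (-(1 - ω) * x) * sinh x := by
  have h : exp ((ω - 2) * x) ≤ exp (-(ω * x)) := exp_le_exp.2 (by nlinarith)
  have e1 : exp (-(1 - ω) * x) * exp x = exp (ω * x) := by rw [← exp_add]; ring_nf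
  have e2 : exp (-(1 - ω) * x) * exp (-x) = exp ((ω - 2) * x) := by rw [← exp_add]; ring_nf
  rw [sinh_eq, sinh_eq, mul_div_assoc', mul_sub, e1, e2]
  linarith

end Real

lemma cFun_of_ne_zero {x : ℝ} (hx : x ≠ 0) : cFun x = x * cosh x / sinh x := if_neg hx

lemma cFun_neg (x : ℝ) : cFun (-x) = cFun x := by
  rcases eq_or_ne x 0 with rfl | hx
  · simp
  · rw [cFun_of_ne_zero hx, cFun_of_ne_zero (neg_ne_zero.2 hx), cosh_neg, sinh_neg, neg_mul,
      neg_div_neg_eq]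

lemma cFun_mem_Icc (x : ℝ) : cFun x ∈ Icc 1 (cosh x) := by
  wlog hx : 0 < x generalizing x
  · rcases (not_lt.1 hx).eq_or_lt with rfl | hx
    · simp [cFun]
    · simpa [cFun_neg] using this (-x) (neg_pos.2 hx)
  have hs : 0 < sinh x := sinh_pos_iff.2 hx
  rw [cFun_of_ne_zero hx.ne', mem_Icc, one_le_div hs, div_le_iff₀ hs]
  exact ⟨sinh_le_mul_cosh hx.le, by nlinarith [self_le_sinh_iff.2 hx.le, cosh_pos x]⟩

/-- `cFun` is squeezed between `1` and `cosh`, which agree to first order at `0`. -/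
lemma hasDerivAt_cFun_zero : HasDerivAt cFun 0 0 := by
  have hcosh := hasDerivAt_iff_isLittleO.1 (hasDerivAt_cosh 0)
  refine hasDerivAt_iff_isLittleO.2 (IsBigO.trans_isLittleO ?_ hcosh)
  refine IsBigO.of_bound 1 (Eventually.of_forall fun x => ?_)
  have := cFun_mem_Icc x
  simp only [cosh_zero, sinh_zero, smul_zero, sub_zero, one_mul, Real.norm_eq_abs]
  rw [show cFun 0 = 1 from if_pos rfl, abs_of_nonneg (by linarith [this.1]),
    abs_of_nonneg (by linarith [this.1, this.2])]
  exact sub_le_sub_right this.2 1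

noncomputable def cDeriv (x : ℝ) : ℝ :=
  if x = 0 then 0 else (cosh x * sinh x - x) / sinh x ^ 2

lemma cDeriv_neg (x : ℝ) : cDeriv (-x) = -cDeriv x := by
  rcases eq_or_ne x 0 with rfl | hx
  · simp [cDeriv]
  · rw [cDeriv, cDeriv, if_neg (neg_ne_zero.2 hx), if_neg hx, cosh_neg, sinh_neg]
    ring

lemma hasDerivAt_cFun (x : ℝ) : HasDerivAt cFun (cDeriv x) x := by
  rcases eq_or_ne x 0 with rfl | hx
  · simpa [cDeriv] using hasDerivAt_cFun_zero
  have hs : sinh x ≠ 0 := sinh_ne_zero.2 hx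
  have hquot : HasDerivAt (fun y => y * cosh y / sinh y)
      (((1 * cosh x + x * sinh x) * sinh x - x * cosh x * cosh x) / sinh x ^ 2) x :=
    ((hasDerivAt_id' x).mul (hasDerivAt_cosh x)).div (hasDerivAt_sinh x) hs
  have heq : (fun y => y * cosh y / sinh y) =ᶠ[𝓝 x] cFun :=
    eventually_of_mem (isOpen_ne.mem_nhds hx) fun y hy => (cFun_of_ne_zero hy).symm
  refine (hquot.congr_of_eventuallyEq heq.symm).congr_deriv ?_
  rw [cDeriv, if_neg hx]
  field_simp
  linear_combination (-x) * cosh_sq x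

lemma cFun_sub_self_eq {x : ℝ} (hx : x ≠ 0) : cFun x - x = x * exp (-x) / sinh x := by
  rw [cFun_of_ne_zero hx, ← cosh_sub_sinh]
  field_simp [sinh_ne_zero.2 hx]

lemma self_le_cFun {x : ℝ} (hx : 0 < x) : x ≤ cFun x := by
  have hs := sinh_pos_iff.2 hx
  have : 0 ≤ x * exp (-x) / sinh x := by positivity
  linarith [cFun_sub_self_eq hx.ne']

lemma cFun_sub_self_le {x : ℝ} (hx : 0 < x) : cFun x - x ≤ exp (-x) := by
  have hs : 0 < sinh x := sinh_pos_iff.2 hx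
  rw [cFun_sub_self_eq hx.ne', div_le_iff₀ hs, mul_comm]
  exact mul_le_mul_of_nonneg_left (self_le_sinh_iff.2 hx.le) (exp_pos _).le

lemma abs_one_sub_cDeriv_le {x : ℝ} (hx : 0 < x) : |1 - cDeriv x| ≤ (sinh x)⁻¹ := by
  have hs : 0 < sinh x := sinh_pos_iff.2 hx
  have heq : 1 - cDeriv x = (x - sinh x * exp (-x)) / sinh x ^ 2 := by
    rw [cDeriv, if_neg hx.ne', ← cosh_sub_sinh]
    field_simp
    ring
  have hnum : |x - sinh x * exp (-x)| ≤ sinh x := by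
    refine abs_sub_le_of_nonneg_of_le hx.le (self_le_sinh_iff.2 hx.le) (by positivity) ?_
    exact mul_le_of_le_one_right hs.le (exp_le_one_iff.2 (by linarith))
  rw [heq, abs_div, abs_of_pos (pow_pos hs 2), div_le_iff₀ (pow_pos hs 2)]
  calc _ ≤ sinh x := hnum
    _ = (sinh x)⁻¹ * sinh x ^ 2 := by field_simp

lemma abs_one_sub_cDeriv_mul_sinh_le {ω x : ℝ} (hω0 : 0 ≤ ω) (hω1 : ω ≤ 1) (hx : 0 < x) :
    |(1 - cDeriv x) * sinh (ω * x)| ≤ exp (-(1 - ω) * x) := by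
  have hs : 0 < sinh x := sinh_pos_iff.2 hx
  rw [abs_mul, abs_of_nonneg (sinh_nonneg_iff.2 (by positivity))]
  calc |1 - cDeriv x| * sinh (ω * x) ≤ (sinh x)⁻¹ * (exp (-(1 - ω) * x) * sinh x) :=
        mul_le_mul (abs_one_sub_cDeriv_le hx) (sinh_mul_le_exp_mul_sinh hω1 hx.le)
          (sinh_nonneg_iff.2 (by positivity)) (inv_pos.2 hs).le
    _ = exp (-(1 - ω) * x) := by field_simp

lemma exp_neg_mul_cFun_le {t x : ℝ} (ht : 0 ≤ t) (hx : 0 < x) :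
    exp (-t * cFun x) ≤ exp (-(t * x)) :=
  exp_le_exp.2 (by nlinarith [self_le_cFun hx])

lemma exp_neg_mul_sub_exp_neg_mul_cFun_le {t x : ℝ} (ht : 0 ≤ t) (hx : 0 < x) :
    exp (-(t * x)) - exp (-t * cFun x) ≤ t * exp (-x) * exp (-(t * x)) := by
  have hsplit : exp (-t * cFun x) = exp (-(t * x)) * exp (-(t * (cFun x - x))) := by
    rw [← exp_add]; ring_nf
  have h1 := add_one_le_exp (-(t * (cFun x - x)))
  have h2 : t * (cFun x - x) ≤ t * exp (-x) := mul_le_mul_of_nonneg_left (cFun_sub_self_le hx) ht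
  rw [hsplit]
  nlinarith [exp_pos (-(t * x))]

noncomputable def gDeriv (t ω x : ℝ) : ℝ :=
  ω * cosh (ω * x) * exp (-t * cFun x) - t * cDeriv x * sinh (ω * x) * exp (-t * cFun x)
    - (ω - t) * cosh ((ω - t) * x)

section

variable {t ω x : ℝ}

lemma hasDerivAt_gFun (x : ℝ) : HasDerivAt (gFun t ω) (gDeriv t ω x) x := by
  have hsinh (a : ℝ) : HasDerivAt (fun y => sinh (a * y)) (cosh (a * x) * (a * 1)) x :=
    ((hasDerivAt_id' x).const_mul a).sinh
  have hexp : HasDerivAt (fun y => exp (-t * cFun y)) (exp (-t * cFun x) * (-t * cDeriv x)) x :=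
    ((hasDerivAt_cFun x).const_mul (-t)).exp
  exact (((hsinh ω).mul hexp).sub (hsinh (ω - t))).congr_deriv (by rw [gDeriv]; ring)

lemma deriv_gFun : deriv (gFun t ω) = gDeriv t ω :=
  funext fun x => (hasDerivAt_gFun x).deriv

lemma gFun_odd : (gFun t ω).Odd := fun x => by
  simp only [gFun, mul_neg, sinh_neg, cFun_neg]
  ring

lemma gDeriv_even : (gDeriv t ω).Even := fun x => by
  simp only [gDeriv, mul_neg, sinh_neg, cosh_neg, cFun_neg, cDeriv_neg]
  ring

lemma sinh_mul_exp_neg_mul_sub_sinh :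
    sinh (ω * x) * exp (-(t * x)) - sinh ((ω - t) * x)
      = (exp (-(ω - t) * x) - exp (-(ω + t) * x)) / 2 := by
  simp only [sinh_eq]
  rw [div_mul_eq_mul_div, sub_mul, ← exp_add, ← exp_add]
  ring_nf

lemma cosh_mul_exp_neg_mul_sub_cosh :
    (ω * cosh (ω * x) - t * sinh (ω * x)) * exp (-(t * x)) - (ω - t) * cosh ((ω - t) * x)
      = ((ω + t) * exp (-(ω + t) * x) - (ω - t) * exp (-(ω - t) * x)) / 2 := by
  simp only [sinh_eq, cosh_eq]
  have e1 : exp (ω * x) * exp (-(t * x)) = exp ((ω - t) * x) := by rw [← exp_add]; ring_nf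
  have e2 : exp (-(ω * x)) * exp (-(t * x)) = exp (-(ω + t) * x) := by rw [← exp_add]; ring_nf
  have e3 : exp (-((ω - t) * x)) = exp (-(ω - t) * x) := by ring_nf
  rw [e3]
  linear_combination ((ω - t) / 2) * e1 + ((ω + t) / 2) * e2

lemma abs_mul_exp_sub_exp_cFun_le {y : ℝ} (ht0 : 0 ≤ t) (ht1 : t ≤ 1) (hx : 0 < x)
    (hy : |y| ≤ exp (ω * x)) :
    |y * (exp (-(t * x)) - exp (-t * cFun x))| ≤ exp (-(1 - ω + t) * x) := by
  have hD0 : 0 ≤ exp (-(t * x)) - exp (-t * cFun x) := sub_nonneg.2 (exp_neg_mul_cFun_le ht0 hx)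
  have hD := exp_neg_mul_sub_exp_neg_mul_cFun_le ht0 hx
  have hexp : exp (ω * x) * (exp (-x) * exp (-(t * x))) = exp (-(1 - ω + t) * x) := by
    rw [← exp_add, ← exp_add]; ring_nf
  rw [abs_mul, abs_of_nonneg hD0, ← hexp]
  refine mul_le_mul hy (hD.trans ?_) hD0 (exp_pos _).le
  rw [mul_assoc]
  exact mul_le_of_le_one_left (by positivity) ht1

lemma abs_gFun_le (ht0 : 0 ≤ t) (htω : t ≤ ω) (hω1 : ω ≤ 1) (hx : 0 < x) :
    |gFun t ω x| ≤ exp (-(ω - t) * x) + 2 * exp (-(1 - ω + t) * x) := by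
  have hsplit : gFun t ω x = (sinh (ω * x) * exp (-(t * x)) - sinh ((ω - t) * x))
      - sinh (ω * x) * (exp (-(t * x)) - exp (-t * cFun x)) := by
    rw [gFun]; ring
  have hmain : |sinh (ω * x) * exp (-(t * x)) - sinh ((ω - t) * x)| ≤ exp (-(ω - t) * x) := by
    have hle : exp (-(ω + t) * x) ≤ exp (-(ω - t) * x) := exp_le_exp.2 (by nlinarith)
    have := abs_sub_le_of_nonneg_of_le (exp_pos _).le le_rfl (exp_pos _).le hle
    rw [sinh_mul_exp_neg_mul_sub_sinh, abs_div, abs_two]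
    linarith [exp_pos (-(ω - t) * x)]
  have hcorr := abs_mul_exp_sub_exp_cFun_le ht0 (htω.trans hω1) hx
    (abs_sinh_le_exp (mul_nonneg (ht0.trans htω) hx.le))
  rw [hsplit]
  linarith [abs_sub (sinh (ω * x) * exp (-(t * x)) - sinh ((ω - t) * x))
    (sinh (ω * x) * (exp (-(t * x)) - exp (-t * cFun x))), exp_pos (-(1 - ω + t) * x)]

lemma abs_gDeriv_le (ht0 : 0 ≤ t) (htω : t ≤ ω) (hω1 : ω ≤ 1) (hx : 0 < x) :
    |gDeriv t ω x| ≤ exp (-(ω - t) * x) + 2 * exp (-(1 - ω + t) * x) := by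
  have hω0 : 0 ≤ ω := ht0.trans htω
  set y := ω * cosh (ω * x) - t * sinh (ω * x)
  have hsplit : gDeriv t ω x = (y * exp (-(t * x)) - (ω - t) * cosh ((ω - t) * x))
      - y * (exp (-(t * x)) - exp (-t * cFun x))
      + t * ((1 - cDeriv x) * sinh (ω * x)) * exp (-t * cFun x) := by
    rw [gDeriv]; ring
  have hmain : |y * exp (-(t * x)) - (ω - t) * cosh ((ω - t) * x)| ≤ exp (-(ω - t) * x) := by
    have hle : exp (-(ω + t) * x) ≤ exp (-(ω - t) * x) := exp_le_exp.2 (by nlinarith)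
    have := abs_sub_le_of_nonneg_of_le (by positivity)
      (by nlinarith [exp_pos (-(ω + t) * x)] :
        (ω + t) * exp (-(ω + t) * x) ≤ 2 * exp (-(ω - t) * x))
      (mul_nonneg (sub_nonneg.2 htω) (exp_pos _).le)
      (by nlinarith [exp_pos (-(ω - t) * x)] :
        (ω - t) * exp (-(ω - t) * x) ≤ 2 * exp (-(ω - t) * x))
    rw [cosh_mul_exp_neg_mul_sub_cosh, abs_div, abs_two]
    linarith
  have hy : |y| ≤ exp (ω * x) := by
    have hc := cosh_add_sinh (ω * x)
    have hs : 0 ≤ sinh (ω * x) := sinh_nonneg_iff.2 (by positivity)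
    refine abs_sub_le_of_nonneg_of_le (by positivity) ?_ (by positivity) ?_ <;>
      nlinarith [cosh_pos (ω * x)]
  have hcorr := abs_mul_exp_sub_exp_cFun_le ht0 (htω.trans hω1) hx hy
  have hderiv : |t * ((1 - cDeriv x) * sinh (ω * x)) * exp (-t * cFun x)|
      ≤ exp (-(1 - ω + t) * x) := by
    rw [abs_mul, abs_mul, abs_of_nonneg ht0, abs_of_pos (exp_pos _)]
    calc t * |(1 - cDeriv x) * sinh (ω * x)| * exp (-t * cFun x)
        ≤ 1 * exp (-(1 - ω) * x) * exp (-(t * x)) :=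
          mul_le_mul (mul_le_mul (htω.trans hω1) (abs_one_sub_cDeriv_mul_sinh_le hω0 hω1 hx)
            (abs_nonneg _) zero_le_one) (exp_neg_mul_cFun_le ht0 hx) (exp_pos _).le (by positivity)
      _ = exp (-(1 - ω + t) * x) := by rw [one_mul, ← exp_add]; ring_nf
  rw [hsplit]
  linarith [abs_add_le (y * exp (-(t * x)) - (ω - t) * cosh ((ω - t) * x)
      - y * (exp (-(t * x)) - exp (-t * cFun x)))
      (t * ((1 - cDeriv x) * sinh (ω * x)) * exp (-t * cFun x)),
    abs_sub (y * exp (-(t * x)) - (ω - t) * cosh ((ω - t) * x))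
      (y * (exp (-(t * x)) - exp (-t * cFun x)))]

lemma integrableOn_Ioi_exp_add_exp (ht : 0 ≤ t) (htω : t < ω) (hω1 : ω < 1) :
    IntegrableOn (fun x => exp (-(ω - t) * x) + 2 * exp (-(1 - ω + t) * x)) (Ioi 0) :=
  (exp_neg_integrableOn_Ioi 0 (by linarith)).add
    ((exp_neg_integrableOn_Ioi 0 (by linarith)).const_mul 2)

lemma integrable_gFun (ht : 0 ≤ t) (htω : t < ω) (hω1 : ω < 1) : Integrable (gFun t ω) :=
  integrable_of_norm_neg_eq_of_le_on_Ioi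
    (continuous_iff_continuousAt.2 fun x => (hasDerivAt_gFun x).continuousAt).aestronglyMeasurable
    (fun x => by rw [gFun_odd.eq, norm_neg]) (integrableOn_Ioi_exp_add_exp ht htω hω1)
    fun _ hx => abs_gFun_le ht htω.le hω1.le hx

lemma integrable_gDeriv (ht : 0 ≤ t) (htω : t < ω) (hω1 : ω < 1) : Integrable (gDeriv t ω) :=
  integrable_of_norm_neg_eq_of_le_on_Ioi
    (deriv_gFun (t := t) (ω := ω) ▸ aestronglyMeasurable_deriv _ _)
    (fun x => by rw [gDeriv_even.eq]) (integrableOn_Ioi_exp_add_exp ht htω hω1)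
    fun _ hx => abs_gDeriv_le ht htω.le hω1.le hx

end

/-- For `ω ∈ (0,1)` and `0 < t < ω`, the function
`g(x) = sinh(ωx) e^{-t c(x)} - sinh((ω-t)x)` has a Lebesgue-integrable derivative on `ℝ`,
and for every `ξ ∈ ℝ`,
`∫_ℝ e^{-ixξ} g'(x) dx = iξ ∫_ℝ e^{-ixξ} g(x) dx = 2ξ ∫_0^∞ sin(xξ) g(x) dx`. -/
theorem stmt9 (t ω : ℝ) (hω : ω ∈ Set.Ioo (0 : ℝ) 1) (ht : 0 < t) (htω : t < ω) :
    MeasureTheory.Integrable (deriv (gFun t ω)) ∧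
    ∀ ξ : ℝ,
      (∫ x : ℝ, Complex.exp (-Complex.I * x * ξ) * (Complex.ofReal (deriv (gFun t ω) x))) =
          Complex.I * ξ * ∫ x : ℝ, Complex.exp (-Complex.I * x * ξ) * (Complex.ofReal (gFun t ω x)) ∧
      Complex.I * ξ * (∫ x : ℝ, Complex.exp (-Complex.I * x * ξ) * (Complex.ofReal (gFun t ω x))) =
        2 * ξ * Complex.ofReal (∫ x in Set.Ioi (0 : ℝ), Real.sin (x * ξ) * gFun t ω x) := by
  have hg := integrable_gFun ht.le htω hω.2
  have hg' : Integrable (deriv (gFun t ω)) := deriv_gFun ▸ integrable_gDeriv ht.le htω hω.2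
  refine ⟨hg', fun ξ => ⟨integral_exp_mul_deriv hg
    (fun x => (hasDerivAt_gFun x).differentiableAt) hg' ξ, ?_⟩⟩
  rw [integral_exp_mul_of_odd hg gFun_odd ξ]
  linear_combination
    (-2 * ξ * ((∫ x in Ioi 0, Real.sin (x * ξ) * gFun t ω x : ℝ) : ℂ)) * Complex.I_sq
end

section
/- For every x ∈ ℝ, 1 − c(x) = (π/4) ∫_ℝ ( cos(ux) − 1 ) / sinh²(πu/2) du, the integral converging absolutely (the integrand extends continuously to u = 0). Equivalently, 1 − x coth(x) = ∫_{ℝ∖{0}} (e^{iux} − 1) (π/4) du/sinh²(πu/2). -/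
open Real MeasureTheory

/-- The integrand `u ↦ (cos(ux) - 1)/sinh²(πu/2)`, extended continuously at `u = 0`
(where its limit is `-2x²/π²`). -/
noncomputable def levyIntegrand (x : ℝ) (u : ℝ) : ℝ :=
  if u = 0 then -2 * x ^ 2 / Real.pi ^ 2
  else (Real.cos (u * x) - 1) / Real.sinh (Real.pi * u / 2) ^ 2

/-!
For `u > 0` expand `1 / sinh²(πu/2) = 4 ∑_{n ≥ 1} n e^{-πnu}`. All terms of
`(1 - cos(ux)) / sinh²(πu/2)` are then nonnegative, so the series may be integrated termwise;
the Laplace transform of `1 - cos(ux)` at `πn` turns the integral into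
`(4x²/π) ∑_{n ≥ 1} 1 / (x² + π²n²)`, and the Mittag-Leffler expansion of the cotangent at
`ix/π` sums this to `(2/π)(x coth x - 1)`. The integrand is even in `u`, which accounts for
the remaining factor `2`.
-/

open Set Filter

namespace MeasureTheory

theorem integrable_and_integral_eq_of_hasSum_of_nonneg {α : Type*} [MeasurableSpace α]
    {μ : Measure α} {F : ℕ → α → ℝ} {f : α → ℝ} {S : ℝ}
    (hF_nonneg : ∀ n a, 0 ≤ F n a) (hF_int : ∀ n, Integrable (F n) μ)
    (hS : HasSum (fun n => ∫ a, F n a ∂μ) S) (hf : ∀ᵐ a ∂μ, HasSum (fun n => F n a) (f a)) :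
    Integrable f μ ∧ ∫ a, f a ∂μ = S := by
  have hf_meas : AEStronglyMeasurable f μ :=
    aestronglyMeasurable_of_tendsto_ae atTop
      (fun N => Finset.aestronglyMeasurable_fun_sum _ fun n _ => (hF_int n).1)
      (hf.mono fun a ha => ha.tendsto_sum_nat)
  have hf_nonneg : 0 ≤ᵐ[μ] f := hf.mono fun a ha => ha.nonneg (hF_nonneg · a)
  have hF_lintegral (n : ℕ) :
      ∫⁻ a, ENNReal.ofReal (F n a) ∂μ = ENNReal.ofReal (∫ a, F n a ∂μ) :=
    (ofReal_integral_eq_lintegral_ofReal (hF_int n) (.of_forall (hF_nonneg n))).symm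
  have hf_lintegral : ∫⁻ a, ENNReal.ofReal (f a) ∂μ = ENNReal.ofReal S :=
    calc ∫⁻ a, ENNReal.ofReal (f a) ∂μ = ∫⁻ a, ∑' n, ENNReal.ofReal (F n a) ∂μ := by
          refine lintegral_congr_ae (hf.mono fun a ha => ?_)
          dsimp only
          rw [← ENNReal.ofReal_tsum_of_nonneg (hF_nonneg · a) ha.summable, ha.tsum_eq]
      _ = ∑' n, ENNReal.ofReal (∫ a, F n a ∂μ) := by
          rw [lintegral_tsum fun n => (hF_int n).1.aemeasurable.ennreal_ofReal]
          simp only [hF_lintegral]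
      _ = ENNReal.ofReal S := by
          rw [← ENNReal.ofReal_tsum_of_nonneg (fun n => integral_nonneg (hF_nonneg n))
            hS.summable, hS.tsum_eq]
  refine ⟨⟨hf_meas, ?_⟩, ?_⟩
  · rw [hasFiniteIntegral_iff_ofReal hf_nonneg, hf_lintegral]
    exact ENNReal.ofReal_lt_top
  · rw [integral_eq_lintegral_of_nonneg_ae hf_nonneg hf_meas, hf_lintegral,
      ENNReal.toReal_ofReal (hS.nonneg fun n => integral_nonneg (hF_nonneg n))]

theorem IntegrableOn.comp_abs {f : ℝ → ℝ} (hf : IntegrableOn f (Ioi 0)) :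
    Integrable (fun x => f |x|) := by
  have hIoi : IntegrableOn (fun x => f |x|) (Ioi 0) :=
    hf.congr_fun (fun x hx => by rw [abs_of_pos hx]) measurableSet_Ioi
  have hIic : IntegrableOn (fun x => f |x|) (Iic 0) := by
    have hneg : MeasurableEmbedding fun x : ℝ => -x := (Homeomorph.neg ℝ).measurableEmbedding
    rw [← Measure.map_neg_eq_self (volume : Measure ℝ), hneg.integrableOn_map_iff]
    simp_rw [Function.comp_def, abs_neg, neg_preimage, neg_Iic, neg_zero]
    exact Iff.mpr integrableOn_Ici_iff_integrableOn_Ioi hIoi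
  rw [← integrableOn_univ, ← Iic_union_Ioi (a := 0)]
  exact hIic.union hIoi

end MeasureTheory

theorem integrableOn_exp_neg_mul_mul_cos_Ioi {b : ℝ} (hb : 0 < b) (x : ℝ) :
    IntegrableOn (fun u => exp (-b * u) * cos (x * u)) (Ioi 0) := by
  refine (integrableOn_exp_mul_Ioi (neg_lt_zero.mpr hb) 0).mono' (by fun_prop) ?_
  refine .of_forall fun u => ?_
  rw [norm_mul, norm_of_nonneg (exp_pos _).le]
  exact mul_le_of_le_one_right (exp_pos _).le (abs_cos_le_one _)

theorem integral_exp_neg_mul_mul_cos_Ioi {b : ℝ} (hb : 0 < b) (x : ℝ) :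
    ∫ u in Ioi 0, exp (-b * u) * cos (x * u) = b / (b ^ 2 + x ^ 2) := by
  have ha : (-b + x * Complex.I).re < 0 := by simpa using hb
  have h := congrArg Complex.re (integral_exp_mul_complex_Ioi ha 0)
  rw [← RCLike.re_to_complex, ← integral_re (integrableOn_exp_mul_complex_Ioi ha 0)] at h
  simpa [Complex.exp_re, Complex.div_re, Complex.normSq_apply, neg_mul, sq] using h

theorem integrableOn_one_sub_cos_mul_mul_exp_neg_Ioi {b : ℝ} (hb : 0 < b) (x : ℝ) :
    IntegrableOn (fun u => (1 - cos (x * u)) * exp (-b * u)) (Ioi 0) := by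
  have h := (integrableOn_exp_mul_Ioi (neg_lt_zero.mpr hb) 0).sub
    (integrableOn_exp_neg_mul_mul_cos_Ioi hb x)
  exact h.congr_fun (fun u _ => by simp only [Pi.sub_apply]; ring) measurableSet_Ioi

theorem integral_one_sub_cos_mul_mul_exp_neg_Ioi {b : ℝ} (hb : 0 < b) (x : ℝ) :
    ∫ u in Ioi 0, (1 - cos (x * u)) * exp (-b * u) = x ^ 2 / (b * (b ^ 2 + x ^ 2)) := by
  have hexp := integrableOn_exp_mul_Ioi (neg_lt_zero.mpr hb) 0
  have hcos := integrableOn_exp_neg_mul_mul_cos_Ioi hb x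
  simp_rw [sub_mul, one_mul, mul_comm (cos _)]
  rw [integral_sub hexp hcos, integral_exp_mul_Ioi (neg_lt_zero.mpr hb),
    integral_exp_neg_mul_mul_cos_Ioi hb]
  field_simp
  simp

theorem hasSum_inv_sinh_sq {t : ℝ} (ht : 0 < t) :
    HasSum (fun n : ℕ => 4 * (n + 1) * exp (-2 * (n + 1) * t)) (sinh t ^ 2)⁻¹ := by
  obtain ⟨q, hq0, hq1, rfl⟩ : ∃ q : ℝ, 0 < q ∧ q < 1 ∧ t = -log q :=
    ⟨exp (-t), exp_pos _, exp_lt_one_iff.mpr (neg_lt_zero.mpr ht), by simp⟩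
  have hgeom : HasSum (fun n : ℕ => (n : ℝ) * (q ^ 2) ^ n) (q ^ 2 / (1 - q ^ 2) ^ 2) :=
    hasSum_coe_mul_geometric_of_norm_lt_one (by
      rw [norm_pow, norm_of_nonneg hq0.le]; exact pow_lt_one₀ hq0.le hq1 two_ne_zero)
  have hshift := (hasSum_nat_add_iff (f := fun n : ℕ => (n : ℝ) * (q ^ 2) ^ n) 1).mpr
    (by simpa using hgeom)
  have hexp (n : ℕ) : exp (-2 * (n + 1) * -log q) = (q ^ 2) ^ (n + 1) := by
    rw [show -2 * ((n : ℝ) + 1) * -log q = ((2 * (n + 1) : ℕ) : ℝ) * log q by push_cast; ring,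
      exp_nat_mul, exp_log hq0, pow_mul]
  have hsinh : sinh (-log q) = (1 - q ^ 2) / (2 * q) := by
    rw [sinh_eq, neg_neg, exp_log hq0, exp_neg, exp_log hq0]
    field_simp
  have hq2 : 1 - q ^ 2 ≠ 0 := by nlinarith
  have hval : 4 * (q ^ 2 / (1 - q ^ 2) ^ 2) = (sinh (-log q) ^ 2)⁻¹ := by
    rw [hsinh]
    field_simp
    norm_num
  rw [← hval]
  refine (hshift.mul_left 4).congr_fun fun n => ?_
  rw [hexp]
  push_cast
  ring

theorem hasSum_cFun_sub_one (y : ℝ) :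
    HasSum (fun n : ℕ => 2 * y ^ 2 / (y ^ 2 + π ^ 2 * (n + 1) ^ 2)) (cFun y - 1) := by
  rcases eq_or_ne y 0 with rfl | hy
  · simp [cFun, hasSum_zero]
  set z : ℂ := y / π * Complex.I with hz_def
  have hz : z ∈ Complex.integerComplement := by
    rintro ⟨n, hn⟩
    have him := congrArg Complex.im hn
    simp only [hz_def, Complex.intCast_im, Complex.mul_im, Complex.I_re, Complex.I_im, mul_zero,
      mul_one, add_zero, Complex.div_ofReal_re, Complex.ofReal_re] at him
    exact div_ne_zero hy pi_ne_zero him.symm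
  have hcot := (summable_cotTerm hz).hasSum.mul_left z
  rw [← cot_series_rep' hz] at hcot
  have hterm (n : ℕ) :
      ((2 * y ^ 2 / (y ^ 2 + π ^ 2 * (n + 1) ^ 2) : ℝ) : ℂ) = z * cotTerm z n := by
    have hsq : (z + (n + 1)) * (z - (n + 1)) =
        -((y ^ 2 + π ^ 2 * (n + 1) ^ 2 : ℝ) : ℂ) / π ^ 2 := by
      rw [hz_def]
      push_cast
      field_simp
      ring_nf
      rw [Complex.I_sq]
      ring
    have hne : ((y ^ 2 + π ^ 2 * (n + 1) ^ 2 : ℝ) : ℂ) ≠ 0 := by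
      exact_mod_cast (by positivity : (0 : ℝ) < y ^ 2 + π ^ 2 * (n + 1) ^ 2).ne'
    rw [cotTerm_identity hz n, hsq]
    push_cast at hne ⊢
    rw [hz_def]
    field_simp
    ring_nf
    rw [Complex.I_sq]
    ring
  have hval : z * (π * Complex.cot (π * z) - 1 / z) = ((cFun y - 1 : ℝ) : ℂ) := by
    have hsinh : Complex.sinh y ≠ 0 := by exact_mod_cast sinh_ne_zero.mpr hy
    have hy' : (y : ℂ) ≠ 0 := by exact_mod_cast hy
    have hπz : π * z = y * Complex.I := by rw [hz_def]; field_simp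
    unfold cFun
    rw [if_neg hy, hπz, Complex.cot_eq_cos_div_sin, Complex.cos_mul_I, Complex.sin_mul_I]
    push_cast
    rw [hz_def]
    field_simp
  rw [hval] at hcot
  exact Complex.hasSum_ofReal.mp (hcot.congr_fun hterm)

theorem levyIntegrand_abs (x u : ℝ) : levyIntegrand x |u| = levyIntegrand x u := by
  rcases abs_choice u with h | h
  · rw [h]
  · simp only [h, levyIntegrand, neg_eq_zero, neg_mul, cos_neg, mul_neg, neg_div, sinh_neg,
      neg_sq]

theorem hasSum_neg_levyIntegrand (x : ℝ) {u : ℝ} (hu : 0 < u) :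
    HasSum (fun n : ℕ => 4 * (n + 1) * ((1 - cos (x * u)) * exp (-(π * (n + 1)) * u)))
      (-levyIntegrand x u) := by
  have h := (hasSum_inv_sinh_sq (by positivity : 0 < π * u / 2)).mul_left (1 - cos (x * u))
  rw [levyIntegrand, if_neg hu.ne', ← neg_div, neg_sub, mul_comm u x, div_eq_mul_inv]
  refine h.congr_fun fun n => ?_
  ring_nf

theorem integrableOn_levyIntegrand_Ioi_and_integral_eq (x : ℝ) :
    IntegrableOn (levyIntegrand x) (Ioi 0) ∧
      ∫ u in Ioi 0, levyIntegrand x u = 2 / π * (1 - cFun x) := by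
  have hb (n : ℕ) : 0 < π * (n + 1) := by positivity
  have hterm_nonneg (n : ℕ) (u : ℝ) :
      0 ≤ 4 * (n + 1) * ((1 - cos (x * u)) * exp (-(π * (n + 1)) * u)) := by
    have : 0 ≤ 1 - cos (x * u) := sub_nonneg.mpr (cos_le_one _)
    positivity
  have hterm_integral : HasSum
      (fun n : ℕ => ∫ u in Ioi 0, 4 * (n + 1) * ((1 - cos (x * u)) * exp (-(π * (n + 1)) * u)))
      (2 / π * (cFun x - 1)) := by
    refine ((hasSum_cFun_sub_one x).mul_left (2 / π)).congr_fun fun n => ?_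
    rw [integral_const_mul, integral_one_sub_cos_mul_mul_exp_neg_Ioi (hb n)]
    field_simp
    ring
  obtain ⟨hint, hval⟩ := integrable_and_integral_eq_of_hasSum_of_nonneg
    (f := fun u => -levyIntegrand x u) hterm_nonneg
    (fun n => (integrableOn_one_sub_cos_mul_mul_exp_neg_Ioi (hb n) x).const_mul _)
    hterm_integral
    ((ae_restrict_iff' measurableSet_Ioi).mpr (.of_forall fun u => hasSum_neg_levyIntegrand x))
  rw [integral_neg] at hval
  exact ⟨integrable_neg_iff.mp hint, by linarith⟩

/-- Lévy–Khintchine formula: for every `x ∈ ℝ`,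
`1 - x coth x = (π/4) ∫_ℝ (cos(ux) - 1)/sinh²(πu/2) du`,
the integral converging absolutely. -/
theorem stmt12 (x : ℝ) :
    MeasureTheory.Integrable (levyIntegrand x) ∧
      1 - cFun x = Real.pi / 4 * ∫ u : ℝ, levyIntegrand x u := by
  obtain ⟨hint, hval⟩ := integrableOn_levyIntegrand_Ioi_and_integral_eq x
  have heven : (fun u => levyIntegrand x |u|) = levyIntegrand x := funext (levyIntegrand_abs x)
  refine ⟨heven ▸ hint.comp_abs, ?_⟩
  rw [← heven, integral_comp_abs, hval]
  field_simp
  ring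
end

section
/- For every α > 0 and every integer j ≥ 1, 𝒜_α^{2j} = (−1)^{j−1} (2α)^{2j−1} · 𝒜_α 𝒥_α and 𝒜_α^{2j−1} = (−1)^{j−1} (2α)^{2j−2} · 𝒜_α. -/
open Matrix

/-- The 2×2 rotation generator `A = [[0, -1], [1, 0]]`. -/
noncomputable def Amat : Matrix (Fin 2) (Fin 2) ℝ := !![0, -1; 1, 0]

/-- The 4×4 matrix `𝒜_α = [[αA, I₂], [-α²I₂, αA]]` in 2×2 block form. -/
noncomputable def Acal (α : ℝ) : Matrix (Fin 2 ⊕ Fin 2) (Fin 2 ⊕ Fin 2) ℝ :=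
  Matrix.fromBlocks (α • Amat) 1 (-(α ^ 2) • 1) (α • Amat)

/-- The 4×4 matrix `𝒥_α = [[0₂, (1/α)I₂], [-αI₂, 0₂]]` in 2×2 block form. -/
noncomputable def Jcal (α : ℝ) : Matrix (Fin 2 ⊕ Fin 2) (Fin 2 ⊕ Fin 2) ℝ :=
  Matrix.fromBlocks 0 (α⁻¹ • 1) ((-α) • 1) 0

/-! Since `A² = -I₂` and all blocks of `𝒜_α` are polynomials in `A`, block multiplication gives
`𝒜_α² = 2α 𝒜_α 𝒥_α` and `𝒜_α³ = -(2α)² 𝒜_α`. Any `x` with `x³ = c x` has `x^(2k+1) = c^k x` and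
`x^(2k+2) = c^k x²`, which yields both formulas with `c^(j-1) = (-1)^(j-1) (2α)^(2j-2)`. -/

theorem pow_two_mul_add_one_of_pow_three_eq_smul {R M : Type*} [Monoid R] [Monoid M]
    [MulAction R M] [IsScalarTower R M M] {c : R} {x : M} (h : x ^ 3 = c • x) (k : ℕ) :
    x ^ (2 * k + 1) = c ^ k • x := by
  induction k with
  | zero => simp
  | succ k ih =>
    rw [show 2 * (k + 1) + 1 = 2 * k + 1 + 2 by ring, pow_add, ih, smul_mul_assoc,
      ← pow_succ', h, smul_smul, pow_succ]

theorem pow_two_mul_add_two_of_pow_three_eq_smul {R M : Type*} [Monoid R] [Monoid M]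
    [MulAction R M] [IsScalarTower R M M] {c : R} {x : M} (h : x ^ 3 = c • x) (k : ℕ) :
    x ^ (2 * k + 2) = c ^ k • x ^ 2 := by
  rw [pow_succ, pow_two_mul_add_one_of_pow_three_eq_smul h, smul_mul_assoc, ← sq]

theorem Amat_mul_self : Amat * Amat = -1 := by
  ext i j; fin_cases i <;> fin_cases j <;> simp [Amat]

theorem Acal_sq_eq_fromBlocks (α : ℝ) : Acal α ^ 2 =
    fromBlocks ((-2 * α ^ 2) • 1) ((2 * α) • Amat) ((-2 * α ^ 3) • Amat) ((-2 * α ^ 2) • 1) := by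
  simp only [sq, Acal, fromBlocks_multiply, smul_mul_smul, Amat_mul_self, mul_one, one_mul]
  congr 1 <;> module

theorem Acal_sq {α : ℝ} (hα : α ≠ 0) : Acal α ^ 2 = (2 * α) • (Acal α * Jcal α) := by
  rw [Acal_sq_eq_fromBlocks, Acal, Jcal]
  simp only [fromBlocks_multiply, fromBlocks_smul, smul_mul_smul, mul_one, one_mul, mul_zero,
    add_zero, zero_add, smul_smul]
  congr 1 <;> congr 1 <;> field_simp

theorem Acal_pow_three (α : ℝ) : Acal α ^ 3 = (-(2 * α) ^ 2) • Acal α := by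
  rw [pow_succ, Acal_sq_eq_fromBlocks, Acal]
  simp only [fromBlocks_multiply, fromBlocks_smul, smul_mul_smul, Amat_mul_self, mul_one, one_mul]
  congr 1 <;> module

/-- For every `α > 0` and every integer `j ≥ 1`,
`𝒜_α^{2j} = (-1)^{j-1} (2α)^{2j-1} 𝒜_α 𝒥_α` and
`𝒜_α^{2j-1} = (-1)^{j-1} (2α)^{2j-2} 𝒜_α`. -/
theorem stmt17 (α : ℝ) (hα : 0 < α) (j : ℕ) (hj : 1 ≤ j) :
    Acal α ^ (2 * j) = ((-1 : ℝ) ^ (j - 1) * (2 * α) ^ (2 * j - 1)) • (Acal α * Jcal α) ∧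
    Acal α ^ (2 * j - 1) = ((-1 : ℝ) ^ (j - 1) * (2 * α) ^ (2 * j - 2)) • Acal α := by
  obtain ⟨k, rfl⟩ := Nat.exists_eq_add_of_le' hj
  have hc : (-(2 * α) ^ 2) ^ k = (-1) ^ k * (2 * α) ^ (2 * k) := by rw [neg_pow, pow_mul]
  rw [show 2 * (k + 1) = 2 * k + 2 by ring, show 2 * k + 2 - 1 = 2 * k + 1 by omega,
    Nat.add_sub_cancel, Nat.add_sub_cancel]
  constructor
  · rw [pow_two_mul_add_two_of_pow_three_eq_smul (Acal_pow_three α), Acal_sq hα.ne', smul_smul,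
      hc, pow_succ _ (2 * k), mul_assoc]
  · rw [pow_two_mul_add_one_of_pow_three_eq_smul (Acal_pow_three α), hc]
end

section
/- For every α > 0 and every t ∈ ℝ, with E(t) = exp(t𝒜_α), one has E(t)·E(t)ᵀ = M(t) ⊗ I₂ and E(t)ᵀ·E(t) = N(t) ⊗ I₂, where M(t) is the 2×2 matrix [[cos²(αt) + sin²(αt)/α², sin(αt)cos(αt)(1/α − α)], [sin(αt)cos(αt)(1/α − α), cos²(αt) + α² sin²(αt)]] and N(t) is the same matrix with the two diagonal entries interchanged; here, for a 2×2 matrix M, M ⊗ I₂ denotes the 4×4 block matrix [[M₁₁I₂, M₁₂I₂], [M₂₁I₂, M₂₂I₂]]. -/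
open Matrix Real

/-- For a 2×2 matrix `M`, the 4×4 block matrix `M ⊗ I₂ = [[M₀₀I₂, M₀₁I₂], [M₁₀I₂, M₁₁I₂]]`. -/
noncomputable def tensorI2 (M : Matrix (Fin 2) (Fin 2) ℝ) :
    Matrix (Fin 2 ⊕ Fin 2) (Fin 2 ⊕ Fin 2) ℝ :=
  Matrix.fromBlocks (M 0 0 • 1) (M 0 1 • 1) (M 1 0 • 1) (M 1 1 • 1)

/-- The 2×2 matrix `M(t)` appearing in `E(t) E(t)ᵀ = M(t) ⊗ I₂`. -/
noncomputable def Mmat (α t : ℝ) : Matrix (Fin 2) (Fin 2) ℝ :=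
  !![Real.cos (α * t) ^ 2 + Real.sin (α * t) ^ 2 / α ^ 2,
      Real.sin (α * t) * Real.cos (α * t) * (α⁻¹ - α);
    Real.sin (α * t) * Real.cos (α * t) * (α⁻¹ - α),
      Real.cos (α * t) ^ 2 + α ^ 2 * Real.sin (α * t) ^ 2]

/-- The 2×2 matrix `N(t)`: `M(t)` with the two diagonal entries interchanged. -/
noncomputable def Nmat (α t : ℝ) : Matrix (Fin 2) (Fin 2) ℝ :=
  !![Real.cos (α * t) ^ 2 + α ^ 2 * Real.sin (α * t) ^ 2,
      Real.sin (α * t) * Real.cos (α * t) * (α⁻¹ - α);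
    Real.sin (α * t) * Real.cos (α * t) * (α⁻¹ - α),
      Real.cos (α * t) ^ 2 + Real.sin (α * t) ^ 2 / α ^ 2]

/-- If `X * X = -1`, then `exp (θ • X) = cos θ • 1 + sin θ • X`. -/
lemma exp_smul_of_sq_eq_neg_one {n : Type*} [Fintype n] [DecidableEq n]
    (X : Matrix n n ℝ) (hX : X * X = -1) (θ : ℝ) :
    NormedSpace.exp (θ • X) = Real.cos θ • (1 : Matrix n n ℝ) + Real.sin θ • X := by
  letI : SeminormedRing (Matrix n n ℝ) := Matrix.linftyOpSemiNormedRing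
  letI : NormedRing (Matrix n n ℝ) := Matrix.linftyOpNormedRing
  letI : NormedAlgebra ℝ (Matrix n n ℝ) := Matrix.linftyOpNormedAlgebra
  let φ : ℂ →ₐ[ℝ] Matrix n n ℝ := Complex.lift ⟨X, hX⟩
  have hφI : φ Complex.I = X := Complex.liftAux_apply_I X hX
  have hφr : ∀ r : ℝ, φ (r : ℂ) = r • (1 : Matrix n n ℝ) := fun r => by
    rw [← Complex.coe_algebraMap, AlgHom.commutes, Algebra.algebraMap_eq_smul_one]
  have hcont : Continuous φ := φ.toLinearMap.continuous_of_finiteDimensional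
  have h1 : θ • X = φ ((θ : ℂ) * Complex.I) := by
    rw [_root_.map_mul, hφI, hφr, smul_mul_assoc, one_mul]
  have h2 : NormedSpace.exp ((θ : ℂ) * Complex.I) = Complex.exp ((θ : ℂ) * Complex.I) := by
    rw [Complex.exp_eq_exp_ℂ]
  rw [h1]
  erw [← NormedSpace.map_exp φ hcont]
  rw [h2, Complex.exp_mul_I, ← Complex.ofReal_cos,
    ← Complex.ofReal_sin, map_add, _root_.map_mul, hφI, hφr, hφr, smul_mul_assoc, one_mul]

set_option maxHeartbeats 1000000 in
/-- For every `α > 0` and `t ∈ ℝ`, with `E(t) = exp(t𝒜_α)`, one has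
`E(t) E(t)ᵀ = M(t) ⊗ I₂` and `E(t)ᵀ E(t) = N(t) ⊗ I₂`. -/
theorem stmt19 (α t : ℝ) (hα : 0 < α) :
    NormedSpace.exp (t • Acal α) * (NormedSpace.exp (t • Acal α))ᵀ =
        tensorI2 (Mmat α t) ∧
    (NormedSpace.exp (t • Acal α))ᵀ * NormedSpace.exp (t • Acal α) =
        tensorI2 (Nmat α t) := by
  have hα' : α ≠ 0 := hα.ne'
  set s := Real.sin (α * t) with hs
  set c := Real.cos (α * t) with hc
  have hsc : s ^ 2 + c ^ 2 = 1 := Real.sin_sq_add_cos_sq (α * t)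
  set J : Matrix (Fin 2 ⊕ Fin 2) (Fin 2 ⊕ Fin 2) ℝ := Matrix.fromBlocks Amat 0 0 Amat with hJdef
  set K : Matrix (Fin 2 ⊕ Fin 2) (Fin 2 ⊕ Fin 2) ℝ :=
    Matrix.fromBlocks 0 (α⁻¹ • 1) ((-α) • 1) 0 with hKdef
  have hA : Amat * Amat = -1 := by
    ext i j; fin_cases i <;> fin_cases j <;>
      simp [Amat, Matrix.mul_apply, Fin.sum_univ_two, Matrix.one_apply]
  have hJ : J * J = -1 := by
    simp [hJdef, Matrix.fromBlocks_multiply, hA, ← Matrix.fromBlocks_one, Matrix.fromBlocks_neg]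
  have hK : K * K = -1 := by
    simp [hKdef, Matrix.fromBlocks_multiply, smul_smul, inv_mul_cancel₀ hα',
      mul_inv_cancel₀ hα', ← Matrix.fromBlocks_one, Matrix.fromBlocks_neg]
  have hcomm : Commute J K := by
    simp only [Commute, SemiconjBy, hJdef, hKdef, Matrix.fromBlocks_multiply]
    simp [Matrix.mul_smul, Matrix.smul_mul]
  have hsplit : t • Acal α = (α * t) • J + (α * t) • K := by
    ext i j
    rcases i with i | i <;> rcases j with j | j <;> fin_cases i <;> fin_cases j <;>
      · simp [Acal, hJdef, hKdef, Amat, Matrix.one_apply]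
        try field_simp
        try ring
  have hexp : NormedSpace.exp (t • Acal α) = (c • 1 + s • J) * (c • 1 + s • K) := by
    rw [hsplit, Matrix.exp_add_of_commute _ _ ((hcomm.smul_left _).smul_right _),
      exp_smul_of_sq_eq_neg_one J hJ, exp_smul_of_sq_eq_neg_one K hK]
  set R : Matrix (Fin 2) (Fin 2) ℝ := !![c, -s; s, c] with hRdef
  set RT : Matrix (Fin 2) (Fin 2) ℝ := !![c, s; -s, c] with hRTdef
  have hRT : Rᵀ = RT := by
    ext i j; fin_cases i <;> fin_cases j <;> simp [hRdef, hRTdef]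
  have hRRT : R * RT = 1 := by
    ext i j; fin_cases i <;> fin_cases j <;>
      · simp [hRdef, hRTdef, Matrix.mul_apply, Fin.sum_univ_two, Matrix.one_apply]
        try linear_combination hsc
        try ring
  have hRTR : RT * R = 1 := by
    ext i j; fin_cases i <;> fin_cases j <;>
      · simp [hRdef, hRTdef, Matrix.mul_apply, Fin.sum_univ_two, Matrix.one_apply]
        try linear_combination hsc
        try ring
  have hE : NormedSpace.exp (t • Acal α) =
      Matrix.fromBlocks (c • R) ((s * α⁻¹) • R) ((-(s * α)) • R) (c • R) := by
    rw [hexp]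
    ext i j
    rcases i with i | i <;> rcases j with j | j <;> fin_cases i <;> fin_cases j <;>
      · simp [hJdef, hKdef, hRdef, Amat, Matrix.mul_apply, Fintype.sum_sum_type,
          Fin.sum_univ_two, Matrix.one_apply]
        try ring
  have hM00 : Mmat α t 0 0 = c ^ 2 + s ^ 2 / α ^ 2 := by simp [Mmat, ← hs, ← hc]
  have hM01 : Mmat α t 0 1 = s * c * (α⁻¹ - α) := by simp [Mmat, ← hs, ← hc]
  have hM10 : Mmat α t 1 0 = s * c * (α⁻¹ - α) := by simp [Mmat, ← hs, ← hc]
  have hM11 : Mmat α t 1 1 = c ^ 2 + α ^ 2 * s ^ 2 := by simp [Mmat, ← hs, ← hc]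
  have hN00 : Nmat α t 0 0 = c ^ 2 + α ^ 2 * s ^ 2 := by simp [Nmat, ← hs, ← hc]
  have hN01 : Nmat α t 0 1 = s * c * (α⁻¹ - α) := by simp [Nmat, ← hs, ← hc]
  have hN10 : Nmat α t 1 0 = s * c * (α⁻¹ - α) := by simp [Nmat, ← hs, ← hc]
  have hN11 : Nmat α t 1 1 = c ^ 2 + s ^ 2 / α ^ 2 := by simp [Nmat, ← hs, ← hc]
  constructor
  · rw [hE, tensorI2, hM00, hM01, hM10, hM11, Matrix.fromBlocks_transpose]
    simp only [Matrix.transpose_smul, hRT]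
    rw [Matrix.fromBlocks_multiply, Matrix.fromBlocks_inj]
    refine ⟨?_, ?_, ?_, ?_⟩ <;>
      · simp only [Matrix.smul_mul, Matrix.mul_smul, smul_smul, hRRT, ← add_smul]
        congr 1
        field_simp
        all_goals ring
  · rw [hE, tensorI2, hN00, hN01, hN10, hN11, Matrix.fromBlocks_transpose]
    simp only [Matrix.transpose_smul, hRT]
    rw [Matrix.fromBlocks_multiply, Matrix.fromBlocks_inj]
    refine ⟨?_, ?_, ?_, ?_⟩ <;>
      · simp only [Matrix.smul_mul, Matrix.mul_smul, smul_smul, hRTR, ← add_smul]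
        congr 1
        field_simp
        all_goals ring
end
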